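/- (Dorfman bracket is a Loday bracket) On ℝ^m, consider pairs A = (V,ζ) where V = (V^1,…,V^m) and ζ = (ζ_1,…,ζ_m) are tuples of smooth functions ℝ^m → ℝ (representing a vector field and a 1-form). Define the Dorfman bracket [(V,ζ),(U,η)]_D = (W,θ) with components W^i = Σ_j ( V^j ∂U^i/∂x^j − U^j ∂V^i/∂x^j ) and θ_i = Σ_j ( V^j ∂η_i/∂x^j + η_j ∂V^j/∂x^i − U^j ( ∂ζ_i/∂x^j − ∂ζ_j/∂x^i ) ). Then the Dorfman bracket satisfies the Jacobi identity in Loday (left Leibniz) form: [A,[B,C]_D]_D = [[A,B]_D,C]_D + [B,[A,C]_D]_D for all such pairs A, B, C. (It is not skew-symmetric in general.) -/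

import Mathlib

/-- Partial derivative in the `i`-th coordinate direction. -/
noncomputable def pd {ι : Type*} [Fintype ι] [DecidableEq ι]
    (i : ι) (f : (ι → ℝ) → ℝ) : (ι → ℝ) → ℝ :=
  fun x => fderiv ℝ f x (Pi.single i 1)

/-- Tuples of smooth functions representing the components of a vector field
(or of a 1-form) on ℝ^m. -/
abbrev Comps (m : ℕ) := Fin m → (Fin m → ℝ) → ℝ

/-- The Dorfman bracket on sections `(V,ζ)` of `Tℝ^m ⊕ T*ℝ^m` in components:
`[(V,ζ),(U,η)]_D = (W,θ)` with `W^i = Σ_j (V^j ∂_j U^i − U^j ∂_j V^i)` and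
`θ_i = Σ_j (V^j ∂_j η_i + η_j ∂_i V^j − U^j (∂_j ζ_i − ∂_i ζ_j))`. -/
noncomputable def dorfman {m : ℕ} (A B : Comps m × Comps m) : Comps m × Comps m :=
  (fun i x => ∑ j : Fin m, (A.1 j x * pd j (B.1 i) x - B.1 j x * pd j (A.1 i) x),
   fun i x => ∑ j : Fin m, (A.1 j x * pd j (B.2 i) x + B.2 j x * pd i (A.1 j) x
      - B.1 j x * (pd j (A.2 i) x - pd i (A.2 j) x)))

section PdLemmas
variable {ι : Type*} [Fintype ι] [DecidableEq ι] {f g : (ι → ℝ) → ℝ} {x : ι → ℝ}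

@[fun_prop] theorem ContDiff.pd' (hf : ContDiff ℝ (⊤ : ℕ∞) f) (i : ι) :
    ContDiff ℝ (⊤ : ℕ∞) (pd i f) :=
  (hf.fderiv_right (by simp)).clm_apply contDiff_const

@[fun_prop] theorem Differentiable.pd'' (hf : ContDiff ℝ (⊤ : ℕ∞) f) (i : ι) :
    Differentiable ℝ (pd i f) := (hf.pd' i).differentiable (by simp)

theorem pd_add (hf : DifferentiableAt ℝ f x) (hg : DifferentiableAt ℝ g x)
    (i : ι) : pd i (fun x => f x + g x) x = pd i f x + pd i g x := by
  unfold pd; rw [fderiv_fun_add hf hg]; rfl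

theorem pd_sub (hf : DifferentiableAt ℝ f x) (hg : DifferentiableAt ℝ g x)
    (i : ι) : pd i (fun x => f x - g x) x = pd i f x - pd i g x := by
  unfold pd; rw [fderiv_fun_sub hf hg]; rfl

theorem pd_mul (hf : DifferentiableAt ℝ f x) (hg : DifferentiableAt ℝ g x)
    (i : ι) : pd i (fun x => f x * g x) x = f x * pd i g x + g x * pd i f x := by
  unfold pd; rw [fderiv_fun_mul hf hg]; simp [mul_comm]

theorem pd_sum {κ : Type*} {s : Finset κ} {F : κ → (ι → ℝ) → ℝ}
    (hf : ∀ j, DifferentiableAt ℝ (F j) x) (i : ι) :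
    pd i (fun x => ∑ j ∈ s, F j x) x = ∑ j ∈ s, pd i (F j) x := by
  unfold pd; rw [fderiv_fun_sum fun j _ => hf j]; simp

/-- Clairaut: second partial derivatives of a smooth function commute. -/
theorem pd_comm (hf : ContDiff ℝ (⊤ : ℕ∞) f) (i j : ι) (x : ι → ℝ) :
    pd i (pd j f) x = pd j (pd i f) x := by
  have hsymm := (hf.contDiffAt (x := x)).isSymmSndFDerivAt (by rw [minSmoothness_of_isRCLikeNormedField]; exact WithTop.coe_le_coe.mpr le_top)
  have hd : DifferentiableAt ℝ (fderiv ℝ f) x :=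
    ((hf.fderiv_right (m := (⊤ : ℕ∞)) (by simp)).differentiable (by simp)).differentiableAt
  have expand : ∀ (k l : ι), pd k (pd l f) x
      = fderiv ℝ (fderiv ℝ f) x (Pi.single k 1) (Pi.single l 1) := by
    intro k l
    show fderiv ℝ (fun y => fderiv ℝ f y (Pi.single l 1)) x (Pi.single k 1) = _
    rw [fderiv_clm_apply hd (differentiableAt_const _)]
    simp
  rw [expand, expand, hsymm]

/-- To identify two double sums, it suffices to identify their symmetrizations. -/
theorem sum2_ext {m : ℕ} (F G : Fin m → Fin m → ℝ)
    (h : ∀ j k, F j k + F k j = G j k + G k j) :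
    ∑ j, ∑ k, F j k = ∑ j, ∑ k, G j k := by
  have h2 : ∑ j, ∑ k, (F j k + F k j) = ∑ j, ∑ k, (G j k + G k j) :=
    Finset.sum_congr rfl fun j _ => Finset.sum_congr rfl fun k _ => h j k
  simp only [Finset.sum_add_distrib] at h2
  rw [Finset.sum_comm (f := fun j k => F k j)] at h2
  rw [Finset.sum_comm (f := fun j k => G k j)] at h2
  linarith

theorem swap_pd {m : ℕ} (f : Comps m) (hf : ∀ l, ContDiff ℝ (⊤ : ℕ∞) (f l)) (a b l : Fin m)
    (x : Fin m → ℝ) : pd a (pd b (f l)) x = pd b (pd a (f l)) x := pd_comm (hf l) a b x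

end PdLemmas

/-- The Dorfman bracket satisfies the Jacobi identity in Loday (left Leibniz) form:
`[A,[B,C]_D]_D = [[A,B]_D,C]_D + [B,[A,C]_D]_D`. -/
theorem dorfman_is_loday (m : ℕ) (A B C : Comps m × Comps m)
    (hA1 : ∀ i, ContDiff ℝ (⊤ : ℕ∞) (A.1 i)) (hA2 : ∀ i, ContDiff ℝ (⊤ : ℕ∞) (A.2 i))
    (hB1 : ∀ i, ContDiff ℝ (⊤ : ℕ∞) (B.1 i)) (hB2 : ∀ i, ContDiff ℝ (⊤ : ℕ∞) (B.2 i))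
    (hC1 : ∀ i, ContDiff ℝ (⊤ : ℕ∞) (C.1 i)) (hC2 : ∀ i, ContDiff ℝ (⊤ : ℕ∞) (C.2 i)) :
    dorfman A (dorfman B C) = dorfman (dorfman A B) C + dorfman B (dorfman A C) := by
  have dA1 : ∀ i, Differentiable ℝ (A.1 i) := fun i => (hA1 i).differentiable (by simp)
  have dA2 : ∀ i, Differentiable ℝ (A.2 i) := fun i => (hA2 i).differentiable (by simp)
  have dB1 : ∀ i, Differentiable ℝ (B.1 i) := fun i => (hB1 i).differentiable (by simp)
  have dB2 : ∀ i, Differentiable ℝ (B.2 i) := fun i => (hB2 i).differentiable (by simp)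
  have dC1 : ∀ i, Differentiable ℝ (C.1 i) := fun i => (hC1 i).differentiable (by simp)
  have dC2 : ∀ i, Differentiable ℝ (C.2 i) := fun i => (hC2 i).differentiable (by simp)
  refine Prod.ext ?_ ?_ <;> funext i x <;>
    simp only [dorfman, Prod.fst_add, Prod.snd_add, Pi.add_apply] <;>
    simp (disch := fun_prop) only [pd_sum, pd_sub, pd_add, pd_mul]
  all_goals simp only [mul_sub, sub_mul, mul_add, add_mul, Finset.mul_sum, Finset.sum_mul,
      Finset.sum_sub_distrib, Finset.sum_add_distrib]
  all_goals simp only [← Finset.sum_sub_distrib, ← Finset.sum_add_distrib]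
  all_goals refine sum2_ext _ _ fun j k => ?_
  all_goals simp only [swap_pd A.1 hA1 k j, swap_pd A.1 hA1 k i, swap_pd A.1 hA1 j i,
      swap_pd A.2 hA2 k j, swap_pd A.2 hA2 k i, swap_pd A.2 hA2 j i,
      swap_pd B.1 hB1 k j, swap_pd B.1 hB1 k i, swap_pd B.1 hB1 j i,
      swap_pd B.2 hB2 k j, swap_pd B.2 hB2 k i, swap_pd B.2 hB2 j i,
      swap_pd C.1 hC1 k j, swap_pd C.1 hC1 k i, swap_pd C.1 hC1 j i,
      swap_pd C.2 hC2 k j, swap_pd C.2 hC2 k i, swap_pd C.2 hC2 j i]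
  all_goals ring
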